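/- arXiv:2107.10583 — 9 statements merged into one kernel-verified Lean document; each statement's English description precedes it below -/
import Mathlib

section
/- If R_0 > 1, then the quadratic P(I) = δI² + (b(δ+1) + δd/β − A)I + (bd(δ+1)/β)(1 − R_0) has exactly one positive real root. -/
/-- If `R₀ > 1`, the endemic-equilibrium quadratic has exactly one positive real root. -/
theorem quadratic_unique_positive_root_of_R0_gt_one
    (A b d β δ : ℝ) (hA : 0 < A) (hb : 0 < b) (hd : 0 < d) (hβ : 0 < β) (hδ : 0 < δ)
    (R₀ : ℝ) (hR₀ : R₀ = β * A / (d * (δ + 1))) (hR : 1 < R₀) :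
    ∃! I : ℝ, 0 < I ∧
      δ * I ^ 2 + (b * (δ + 1) + δ * d / β - A) * I
        + (b * d * (δ + 1) / β) * (1 - R₀) = 0 := by
  set B : ℝ := b * (δ + 1) + δ * d / β - A with hB
  set c : ℝ := (b * d * (δ + 1) / β) * (1 - R₀) with hc
  have hcneg : c < 0 := by
    apply mul_neg_of_pos_of_neg
    · positivity
    · linarith
  set D : ℝ := B ^ 2 - 4 * δ * c with hD
  have hDpos : 0 < D := by nlinarith
  set s : ℝ := Real.sqrt D with hs
  have hs2 : s ^ 2 = D := Real.sq_sqrt hDpos.le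
  have hsnn : 0 ≤ s := Real.sqrt_nonneg _
  have hsB : B < s := by nlinarith
  refine ⟨(-B + s) / (2 * δ), ⟨div_pos (by linarith) (by positivity), ?_⟩, ?_⟩
  · have h2δ : (2 * δ) ≠ 0 := by positivity
    field_simp
    nlinarith [hs2]
  · rintro J ⟨hJpos, hJroot⟩
    by_contra hne
    set I₀ : ℝ := (-B + s) / (2 * δ) with hI0
    have hI0pos : 0 < I₀ := div_pos (by linarith) (by positivity)
    have hI0root : δ * I₀ ^ 2 + B * I₀ + c = 0 := by
      rw [hI0]
      field_simp
      nlinarith [hs2]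
    have hsum : δ * (J + I₀) = -B := by
      have hdiff : (J - I₀) * (δ * (J + I₀) + B) = 0 := by
        linear_combination hJroot - hI0root
      rcases mul_eq_zero.mp hdiff with h | h
      · exact absurd (by linarith) hne
      · linarith
    have hprod : c = δ * J * I₀ := by linear_combination hJroot - J * hsum
    have : 0 < δ * J * I₀ := by positivity
    linarith
end

section
/- If R_0 < δ/(δ+1), then the quadratic P(I) = δI² + (b(δ+1) + δd/β − A)I + (bd(δ+1)/β)(1 − R_0) has no positive real root. -/
/-- If `R₀ < δ/(δ+1)`, the endemic-equilibrium quadratic has no positive real root. -/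
theorem quadratic_no_positive_root_of_R0_small
    (A b d β δ : ℝ) (hA : 0 < A) (hb : 0 < b) (hd : 0 < d) (hβ : 0 < β) (hδ : 0 < δ)
    (R₀ : ℝ) (hR₀ : R₀ = β * A / (d * (δ + 1))) (hR : R₀ < δ / (δ + 1)) :
    ∀ I : ℝ, 0 < I →
      δ * I ^ 2 + (b * (δ + 1) + δ * d / β - A) * I
        + (b * d * (δ + 1) / β) * (1 - R₀) ≠ 0 := by
  intro I hI
  have hd1 : 0 < d * (δ + 1) := by positivity
  have hβA : β * A < δ * d := by
    rw [hR₀, div_lt_div_iff₀ hd1 (by positivity)] at hR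
    nlinarith
  have h1 : A < δ * d / β := by
    rw [lt_div_iff₀ hβ]; nlinarith
  have h2 : R₀ < 1 := lt_trans hR (by
    rw [div_lt_one (by positivity)]; linarith)
  have hpos : 0 < δ * I ^ 2 + (b * (δ + 1) + δ * d / β - A) * I
      + (b * d * (δ + 1) / β) * (1 - R₀) := by
    have t1 : 0 < δ * I ^ 2 := by positivity
    have t2 : 0 < (b * (δ + 1) + δ * d / β - A) * I := by
      apply mul_pos _ hI; nlinarith
    have t3 : 0 < (b * d * (δ + 1) / β) * (1 - R₀) := by
      apply mul_pos (by positivity); linarith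
    linarith
  exact ne_of_gt hpos
end

section
/- If R_0 < 1 and b > d/(β(δ+1)), then the quadratic P(I) = δI² + (b(δ+1) + δd/β − A)I + (bd(δ+1)/β)(1 − R_0) has no positive real root. -/
/-- If `R₀ < 1` and `b > d/(β(δ+1))`, the endemic-equilibrium quadratic has no
positive real root. -/
theorem quadratic_no_positive_root_of_R0_lt_one_and_b_large
    (A b d β δ : ℝ) (hA : 0 < A) (hb : 0 < b) (hd : 0 < d) (hβ : 0 < β) (hδ : 0 < δ)
    (R₀ : ℝ) (hR₀ : R₀ = β * A / (d * (δ + 1))) (hR : R₀ < 1)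
    (hbig : b > d / (β * (δ + 1))) :
    ∀ I : ℝ, 0 < I →
      δ * I ^ 2 + (b * (δ + 1) + δ * d / β - A) * I
        + (b * d * (δ + 1) / β) * (1 - R₀) ≠ 0 := by
  intro I hI
  have hδ1 : (0:ℝ) < δ + 1 := by linarith
  have hR0pos : 0 < d * (δ + 1) := by positivity
  have hA' : β * A < d * (δ + 1) := by
    have := (div_lt_one hR0pos).mp (hR₀ ▸ hR)
    linarith
  have hb' : d / β < b * (δ + 1) := by
    rw [gt_iff_lt, div_lt_iff₀ (by positivity)] at hbig
    rw [div_lt_iff₀ hβ]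
    nlinarith
  have hlin : 0 < b * (δ + 1) + δ * d / β - A := by
    have h1 : A < d * (δ + 1) / β := by
      rw [lt_div_iff₀ hβ]; nlinarith
    have h2 : δ * d / β = δ * (d / β) := by ring
    have h3 : d * (δ + 1) / β = d / β + δ * (d / β) := by ring
    nlinarith [hb']
  have hc : 0 < (b * d * (δ + 1) / β) * (1 - R₀) := by
    have : 0 < 1 - R₀ := by linarith
    positivity
  have : 0 < δ * I ^ 2 + (b * (δ + 1) + δ * d / β - A) * I
        + (b * d * (δ + 1) / β) * (1 - R₀) := by positivity
  linarith
end

section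
/- Suppose b < d/(β(δ+1)) and R_0 < 1. Then for R_0 sufficiently close to 1 (equivalently, for ε = d(δ+1)/β − A sufficiently small and positive), the quadratic P(I) = δI² + c_1 I + c_0, with c_1 = b(δ+1) + δd/β − A and c_0 = (bd(δ+1)/β)(1 − R_0), has two distinct positive real roots. -/
/-!
With `m := d/β − b(δ+1)` (positive exactly when `b < d/(β(δ+1))`) and `ε := d(δ+1)/β − A`,
the quadratic reads `δI² − (m − ε)I + bε`. For small `ε > 0` its constant term is positive,
its linear coefficient negative, and its discriminant `(m − ε)² − 4δbε` exceeds
`m² − ε(2m + 4δb)`, which is positive for `ε < m² / (2m + 4δb)`; so both roots are real,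
distinct and positive.
-/

lemma exists_two_pos_roots_of_discrim_pos {a b c : ℝ} (ha : 0 < a) (hb : b < 0) (hc : 0 < c)
    (hΔ : 0 < discrim a b c) :
    ∃ x y : ℝ, 0 < x ∧ 0 < y ∧ x ≠ y ∧
      a * x ^ 2 + b * x + c = 0 ∧ a * y ^ 2 + b * y + c = 0 := by
  set s := √(discrim a b c)
  have hs : discrim a b c = s * s := (Real.mul_self_sqrt hΔ.le).symm
  have hs_pos : 0 < s := Real.sqrt_pos.mpr hΔ
  have hs_lt : s < -b := by
    rw [Real.sqrt_lt' (by linarith), discrim]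
    nlinarith
  have h2a : 0 < 2 * a := by positivity
  refine ⟨(-b + s) / (2 * a), (-b - s) / (2 * a), div_pos (by linarith) h2a,
    div_pos (by linarith) h2a, ?_, ?_, ?_⟩
  · exact ((div_lt_div_iff_of_pos_right h2a).mpr (by linarith)).ne'
  · rw [sq]; exact (quadratic_eq_zero_iff ha.ne' hs _).mpr (Or.inl rfl)
  · rw [sq]; exact (quadratic_eq_zero_iff ha.ne' hs _).mpr (Or.inr rfl)

lemma discrim_pos_of_lt {δ b m ε : ℝ} (hδ : 0 < δ) (hb : 0 < b) (hm : 0 < m)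
    (hε_lt : ε < m ^ 2 / (2 * m + 4 * δ * b)) :
    0 < discrim δ (ε - m) (b * ε) := by
  rw [lt_div_iff₀ (by positivity)] at hε_lt
  rw [discrim]
  nlinarith [sq_nonneg ε]

/-- If `b < d/(β(δ+1))`, then for `R₀` sufficiently close to `1` from below
(equivalently `ε = d(δ+1)/β − A` small and positive) the endemic-equilibrium
quadratic has two distinct positive real roots. -/
theorem two_positive_roots_backward
    (b d β δ : ℝ) (hb : 0 < b) (hd : 0 < d) (hβ : 0 < β) (hδ : 0 < δ)
    (hbs : b < d / (β * (δ + 1))) :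
    ∃ ε₀ > 0, ∀ A : ℝ, 0 < A →
      0 < d * (δ + 1) / β - A → d * (δ + 1) / β - A < ε₀ →
      ∃ I₁ I₂ : ℝ, 0 < I₁ ∧ 0 < I₂ ∧ I₁ ≠ I₂ ∧
        δ * I₁ ^ 2 + (b * (δ + 1) + δ * d / β - A) * I₁
          + (b * d * (δ + 1) / β) * (1 - β * A / (d * (δ + 1))) = 0 ∧
        δ * I₂ ^ 2 + (b * (δ + 1) + δ * d / β - A) * I₂
          + (b * d * (δ + 1) / β) * (1 - β * A / (d * (δ + 1))) = 0 := by
  set m := d / β - b * (δ + 1)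
  have hm : 0 < m := by
    rw [div_mul_eq_div_div, lt_div_iff₀ (by positivity)] at hbs
    exact sub_pos.mpr hbs
  refine ⟨m ^ 2 / (2 * m + 4 * δ * b), by positivity, fun A _ hε hε_lt => ?_⟩
  set ε := d * (δ + 1) / β - A
  have hc₁ : b * (δ + 1) + δ * d / β - A = ε - m := by
    simp only [ε, m]; field_simp; ring
  have hc₀ : (b * d * (δ + 1) / β) * (1 - β * A / (d * (δ + 1))) = b * ε := by
    simp only [ε]; field_simp
  have hεm : ε < m := by
    rw [lt_div_iff₀ (by positivity)] at hε_lt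
    nlinarith [mul_pos (mul_pos hδ hb) hε]
  rw [hc₁, hc₀]
  exact exists_two_pos_roots_of_discrim_pos hδ (by linarith) (by positivity)
    (discrim_pos_of_lt hδ hb hm hε_lt)
end

section
/- If b > d/((δ+1)β), then for every I > 0 the determinant of the Jacobian at an endemic equilibrium, det = (βI/(I+b)²)·(δI² + 2bδI + b²((δ+1) − d/(bβ))), is positive. -/
/-- If `b > d/((δ+1)β)`, the determinant of the Jacobian at any endemic equilibrium
is positive. -/
theorem det_pos_of_b_large
    (b d β δ : ℝ) (hb : 0 < b) (hd : 0 < d) (hβ : 0 < β) (hδ : 0 < δ)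
    (hbig : b > d / ((δ + 1) * β)) :
    ∀ I : ℝ, 0 < I →
      0 < (β * I / (I + b) ^ 2) *
            (δ * I ^ 2 + 2 * b * δ * I + b ^ 2 * ((δ + 1) - d / (b * β))) := by
  intro I hI
  have hsum : 0 < I + b := by linarith
  have h1 : 0 < β * I / (I + b) ^ 2 := by positivity
  have hpos : 0 < (δ + 1) - d / (b * β) := by
    have h2 : d / (b * β) < δ + 1 := by
      rw [div_lt_iff₀ (by positivity)]
      have := (div_lt_iff₀ (by positivity : (0:ℝ) < (δ + 1) * β)).mp hbig
      nlinarith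
    linarith
  have h3 : 0 < δ * I ^ 2 + 2 * b * δ * I + b ^ 2 * ((δ + 1) - d / (b * β)) := by
    nlinarith [mul_pos (mul_pos hb hb) hpos, mul_pos hδ (mul_pos hI hI), mul_pos hb (mul_pos hδ hI), sq_nonneg I]
  exact mul_pos h1 h3
end

section
/- Suppose R_0 > 1, d > 1/4, and b > d/((δ+1)β). Then the unique endemic equilibrium X* of the system dS/dt = A − dS − βIS, dI/dt = βIS − δI − bI/(I+b) has a Jacobian with negative trace and positive determinant, hence both eigenvalues have negative real part and X* is linearly asymptotically stable. -/
/-- If `R₀ > 1`, `d > 1/4` and `b > d/((δ+1)β)`, the Jacobian at the endemic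
equilibrium has negative trace and positive determinant, hence both eigenvalues
have negative real part. -/
theorem endemic_equilibrium_stable
    (A b d β δ : ℝ) (hA : 0 < A) (hb : 0 < b) (hd : 0 < d) (hβ : 0 < β) (hδ : 0 < δ)
    (R₀ : ℝ) (hR₀ : R₀ = β * A / (d * (δ + 1))) (hR : 1 < R₀)
    (hdq : 1 / 4 < d) (hbig : b > d / ((δ + 1) * β))
    (I : ℝ) (hI : 0 < I)
    (hroot : δ * I ^ 2 + (b * (δ + 1) + δ * d / β - A) * I
        + (b * d * (δ + 1) / β) * (1 - R₀) = 0) :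
    (I * b / (I + b) ^ 2 - d - β * I < 0) ∧
    (0 < (β * I / (I + b) ^ 2) *
          (δ * I ^ 2 + 2 * b * δ * I + b ^ 2 * ((δ + 1) - d / (b * β)))) ∧
    ∀ lam : ℂ,
      lam ^ 2 - (I * b / (I + b) ^ 2 - d - β * I : ℝ) * lam
        + ((β * I / (I + b) ^ 2) *
            (δ * I ^ 2 + 2 * b * δ * I + b ^ 2 * ((δ + 1) - d / (b * β))) : ℝ) = 0 →
      lam.re < 0 := by
  have hpos : (0:ℝ) < (I + b) ^ 2 := by positivity
  have hkey : I * b / (I + b) ^ 2 ≤ 1 / 4 := by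
    rw [div_le_iff₀ hpos]; nlinarith [sq_nonneg (I - b)]
  have hT : I * b / (I + b) ^ 2 - d - β * I < 0 := by nlinarith
  have hbr : 0 < (δ + 1) - d / (b * β) := by
    rw [gt_iff_lt, div_lt_iff₀ (by positivity)] at hbig
    rw [sub_pos, div_lt_iff₀ (by positivity)]
    nlinarith
  have hD : 0 < (β * I / (I + b) ^ 2) *
      (δ * I ^ 2 + 2 * b * δ * I + b ^ 2 * ((δ + 1) - d / (b * β))) := by
    apply mul_pos (by positivity)
    nlinarith [mul_pos (mul_pos hδ hI) hI, mul_pos (mul_pos hb hδ) hI,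
      mul_pos (pow_pos hb 2) hbr]
  refine ⟨hT, hD, ?_⟩
  intro lam hlam
  set T : ℝ := I * b / (I + b) ^ 2 - d - β * I with hTdef
  set D : ℝ := (β * I / (I + b) ^ 2) *
      (δ * I ^ 2 + 2 * b * δ * I + b ^ 2 * ((δ + 1) - d / (b * β))) with hDdef
  rw [Complex.ext_iff] at hlam
  simp only [Complex.add_re, Complex.add_im, Complex.sub_re, Complex.sub_im,
    Complex.mul_re, Complex.mul_im, Complex.ofReal_re, Complex.ofReal_im,
    Complex.zero_re, Complex.zero_im, pow_two] at hlam
  obtain ⟨h1, h2⟩ := hlam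
  -- h1 : x*x - y*y - (T*x - 0*y) + D = 0
  -- h2 : x*y + y*x - (T*y + 0*x) + 0 = 0
  by_cases hy0 : lam.im = 0
  · rw [hy0] at h1
    by_contra hxn
    push_neg at hxn
    nlinarith
  · have h2x : 2 * lam.re = T := by
      have h3 : lam.im * (lam.re + lam.re - T) = 0 := by linarith [h2]; 
      rcases mul_eq_zero.mp h3 with h | h
      · exact absurd h hy0
      · linarith
    linarith
end

section
/- Let g(I) := I·b/(I+b)² − d − βI with b, d, β > 0. If d + βb < 1/4, then g(0) < 0 and g(b) > 0, so by the intermediate value theorem there exists I_1 ∈ (0, b) with g(I_1) = 0; moreover this root in (0, b) is unique. -/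
/-- If `d + βb < 1/4`, then `g(0) < 0`, `g(b) > 0`, and `g(I) = I·b/(I+b)² − d − βI`
has a unique root in `(0, b)`. -/
theorem trace_has_unique_root_in_Ioo
    (b d β : ℝ) (hb : 0 < b) (hd : 0 < d) (hβ : 0 < β)
    (hsmall : d + β * b < 1 / 4) :
    ((0 : ℝ) * b / (0 + b) ^ 2 - d - β * 0 < 0) ∧
    (0 < b * b / (b + b) ^ 2 - d - β * b) ∧
    ∃! I : ℝ, I ∈ Set.Ioo 0 b ∧ I * b / (I + b) ^ 2 - d - β * I = 0 := by
  have hb2 : (0:ℝ) < b + b := by linarith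
  refine ⟨by simp; positivity, ?_, ?_⟩
  · have h : b * b / (b + b) ^ 2 = 1 / 4 := by
      field_simp; ring
    rw [h]; nlinarith
  · -- polynomial version
    set f : ℝ → ℝ := fun I => (d + β * I) * (I + b) ^ 2 - I * b with hf
    have hroot : ∀ I : ℝ, 0 < I → I < b →
        (I * b / (I + b) ^ 2 - d - β * I = 0 ↔ f I = 0) := by
      intro I hI hIb
      have hIb0 : (0:ℝ) < (I + b) ^ 2 := by positivity
      rw [hf]
      constructor
      · intro h
        have h2 : I * b / (I + b) ^ 2 = d + β * I := by linarith
        have h3 : I * b = (d + β * I) * (I + b) ^ 2 := by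
          field_simp at h2; linarith
        simp only []; linarith
      · intro h
        have h3 : (d + β * I) * (I + b) ^ 2 = I * b := by simpa [sub_eq_zero] using h
        have : I * b / (I + b) ^ 2 = d + β * I := by
          rw [← h3]; field_simp
        rw [this]; ring
    have hcont : ContinuousOn f (Set.Icc 0 b) := by
      apply Continuous.continuousOn; fun_prop
    have hf0 : 0 < f 0 := by simp [hf]; positivity
    have hfb : f b < 0 := by
      have : f b = b ^ 2 * (4 * (d + β * b) - 1) := by rw [hf]; ring
      rw [this]
      have : 4 * (d + β * b) - 1 < 0 := by linarith
      exact mul_neg_of_pos_of_neg (by positivity) this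
    -- uniqueness key lemma
    have huniq : ∀ x y : ℝ, x ∈ Set.Ioo 0 b → y ∈ Set.Ioo 0 b →
        f x = 0 → f y = 0 → x = y := by
      intro x y hx hy hfx hfy
      obtain ⟨hx0, hxb⟩ := hx
      obtain ⟨hy0, hyb⟩ := hy
      by_contra hne
      -- wlog x < y
      wlog hlt : x < y generalizing x y
      · exact this y x hfy hfx hy0 hyb hx0 hxb (Ne.symm hne)
          (lt_of_le_of_ne (not_lt.1 hlt) (Ne.symm hne))
      rw [hf] at hfx hfy
      simp only [] at hfx hfy
      -- q(x,y) = 0 from dividing f x - f y by x - y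
      have hfactor : (d + β * x) * (x + b) ^ 2 - x * b - ((d + β * y) * (y + b) ^ 2 - y * b)
          = (x - y) * (β * (x^2 + x*y + y^2) + (d + 2*β*b) * (x + y) + (β*b^2 + 2*d*b - b)) := by
        ring
      have hxy : x - y ≠ 0 := by intro h; apply hne; linarith
      have hq : β * (x^2 + x*y + y^2) + (d + 2*β*b) * (x + y) + (β*b^2 + 2*d*b - b) = 0 := by
        have h0 : (x - y) * (β * (x^2 + x*y + y^2) + (d + 2*β*b) * (x + y) + (β*b^2 + 2*d*b - b)) = 0 := by
          rw [← hfactor, hfx, hfy]; ring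
        exact (mul_eq_zero.1 h0).resolve_left hxy
      -- q(y,b) < 0 from f b < 0, f y = 0
      have hfb' : (d + β * b) * (b + b) ^ 2 - b * b < 0 := by
        have : f b = (d + β * b) * (b + b) ^ 2 - b * b := by rw [hf]
        linarith [hfb, this.symm.le]
      have hby : 0 < b - y := by linarith
      have hQyb : β * (y^2 + y*b + b^2) + (d + 2*β*b) * (y + b) + (β*b^2 + 2*d*b - b) < 0 := by
        have key : (b - y) * (β * (y^2 + y*b + b^2) + (d + 2*β*b) * (y + b) + (β*b^2 + 2*d*b - b))
            = ((d + β * b) * (b + b) ^ 2 - b * b) - ((d + β * y) * (y + b) ^ 2 - y * b) := by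
          ring
        nlinarith [key, hfy, hfb', hby]
      have hbr : 0 < β * (x + y + b) + d + 2 * β * b := by positivity
      have hsplit : β * (x^2 + x*y + y^2) + (d + 2*β*b) * (x + y) + (β*b^2 + 2*d*b - b)
          = (β * (y^2 + y*b + b^2) + (d + 2*β*b) * (y + b) + (β*b^2 + 2*d*b - b))
            + (x - b) * (β * (x + y + b) + d + 2 * β * b) := by ring
      nlinarith [hq, hQyb, hsplit, mul_pos (sub_pos.2 hxb) hbr]
    -- existence via IVT
    have hsub : Set.Ioo (f b) (f 0) ⊆ f '' Set.Ioo 0 b :=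
      intermediate_value_Ioo' hb.le hcont
    obtain ⟨I, hI, hfI⟩ := hsub ⟨hfb, hf0⟩
    refine ⟨I, ⟨hI, (hroot I hI.1 hI.2).2 hfI⟩, ?_⟩
    rintro J ⟨hJ, hJroot⟩
    exact huniq J I hJ hI ((hroot J hJ.1 hJ.2).1 hJroot) hfI
end

section
/- Assume A > b(2δ+1)/2, define Δ := A − b(2δ+1)/2 and β_max := (δ+1)d/Δ. Then the quadratic P_M(I) = δI² + (b(δ+1) − A + δd/β_max)I + b(d(δ+1)/β_max − A) satisfies P_M(b) = −bΔ/(δ+1) < 0, hence P_M has a real root strictly greater than b. -/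
/-- With `A > b(2δ+1)/2`, `Δ := A − b(2δ+1)/2` and `β_max := (δ+1)d/Δ`, the
quadratic `P_M` satisfies `P_M(b) = −bΔ/(δ+1) < 0`, hence it has a real root
strictly greater than `b`. -/
theorem PM_at_b_neg_and_root_gt_b
    (A b d δ : ℝ) (hA : 0 < A) (hb : 0 < b) (hd : 0 < d) (hδ : 0 < δ)
    (hAbig : b * (2 * δ + 1) / 2 < A)
    (Δ βmax : ℝ) (hΔ : Δ = A - b * (2 * δ + 1) / 2) (hβmax : βmax = (δ + 1) * d / Δ) :
    (δ * b ^ 2 + (b * (δ + 1) - A + δ * d / βmax) * b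
        + b * (d * (δ + 1) / βmax - A) = -(b * Δ) / (δ + 1)) ∧
    (-(b * Δ) / (δ + 1) < 0) ∧
    ∃ I : ℝ, b < I ∧
      δ * I ^ 2 + (b * (δ + 1) - A + δ * d / βmax) * I
        + b * (d * (δ + 1) / βmax - A) = 0 := by
  have hΔpos : 0 < Δ := by rw [hΔ]; linarith
  have hδ1 : (0:ℝ) < δ + 1 := by linarith
  have hβpos : 0 < βmax := by
    rw [hβmax]; positivity
  have hkey : d / βmax = Δ / (δ + 1) := by
    rw [hβmax]
    field_simp
  set B := b * (δ + 1) - A + δ * d / βmax with hB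
  set C := b * (d * (δ + 1) / βmax - A) with hC
  have hdiv : δ * d / βmax = δ * (d / βmax) := by ring
  have hdiv2 : d * (δ + 1) / βmax = (d / βmax) * (δ + 1) := by ring
  have hBval : B = b * (δ + 1) - A + δ * (Δ / (δ + 1)) := by
    rw [hB, hdiv, hkey]
  have hCval : C = b * (Δ - A) := by
    rw [hC, hdiv2, hkey]
    field_simp
  have h1 : δ * b ^ 2 + B * b + C = -(b * Δ) / (δ + 1) := by
    rw [hBval, hCval, hΔ]
    field_simp
    ring
  have h2 : -(b * Δ) / (δ + 1) < 0 := by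
    apply div_neg_of_neg_of_pos _ hδ1
    nlinarith
  refine ⟨h1, h2, ?_⟩
  -- IVT on f I = δ I^2 + B I + C
  set f : ℝ → ℝ := fun I => δ * I ^ 2 + B * I + C with hf
  have hfb : f b < 0 := by rw [hf]; simpa [h1] using h2
  set M : ℝ := max (b + 1) (max 1 ((|B| + |C| + 1) / δ)) with hM
  have hM1 : 1 ≤ M := le_trans (le_max_left _ _) (le_max_right _ _)
  have hMb : b < M := lt_of_lt_of_le (by linarith) (le_max_left _ _)
  have hMδ : |B| + |C| + 1 ≤ δ * M := by
    have : (|B| + |C| + 1) / δ ≤ M := le_trans (le_max_right _ _) (le_max_right _ _)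
    calc |B| + |C| + 1 = ((|B| + |C| + 1) / δ) * δ := by field_simp
    _ ≤ M * δ := by nlinarith [abs_nonneg B, abs_nonneg C]
    _ = δ * M := by ring
  have hfM : 0 < f M := by
    have hB1 : -|B| ≤ B := neg_abs_le B
    have hC1 : -|C| ≤ C := neg_abs_le C
    have hMpos : 0 < M := by linarith
    rw [hf]
    simp only
    nlinarith [abs_nonneg B, abs_nonneg C, sq_nonneg M]
  have hcont : ContinuousOn f (Set.Icc b M) := by
    apply Continuous.continuousOn
    exact ((continuous_const.mul (continuous_pow 2)).add (continuous_const.mul continuous_id)).add continuous_const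
  have := intermediate_value_Icc (le_of_lt hMb) hcont
  have h0 : (0:ℝ) ∈ Set.Icc (f b) (f M) := ⟨le_of_lt hfb, le_of_lt hfM⟩
  obtain ⟨I, hI, hfI⟩ := this h0
  refine ⟨I, ?_, hfI⟩
  rcases lt_or_eq_of_le hI.1 with h | h
  · exact h
  · exfalso; rw [← h] at hfI; rw [hfI] at hfb; exact lt_irrefl 0 hfb
end

section
/- Suppose b < d/((δ+1)β) and the discriminant condition c_1² − 4c_2c_0 = 0 holds, where c_2 = δ, c_1 = b(δ+1) + δd/β − A, c_0 = (bd(δ+1)/β)(1 − R_0), R_0 = βA/(d(δ+1)) < 1, and c_1 < 0. Then the quadratic c_2I² + c_1I + c_0 has exactly one real root, and this root is positive (a saddle-node point of endemic equilibria). -/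
/-- At the saddle-node point (vanishing discriminant, `c₁ < 0`, `R₀ < 1`,
`b < d/((δ+1)β)`), the endemic-equilibrium quadratic has exactly one real root,
and this root is positive. -/
theorem saddle_node_unique_positive_root
    (A b d β δ : ℝ) (hA : 0 < A) (hb : 0 < b) (hd : 0 < d) (hβ : 0 < β) (hδ : 0 < δ)
    (R₀ : ℝ) (hR₀ : R₀ = β * A / (d * (δ + 1))) (hR : R₀ < 1)
    (hbs : b < d / ((δ + 1) * β))
    (hc1 : b * (δ + 1) + δ * d / β - A < 0)
    (hdisc : (b * (δ + 1) + δ * d / β - A) ^ 2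
        - 4 * δ * ((b * d * (δ + 1) / β) * (1 - R₀)) = 0) :
    (∃! I : ℝ, δ * I ^ 2 + (b * (δ + 1) + δ * d / β - A) * I
        + (b * d * (δ + 1) / β) * (1 - R₀) = 0) ∧
    ∀ I : ℝ, δ * I ^ 2 + (b * (δ + 1) + δ * d / β - A) * I
        + (b * d * (δ + 1) / β) * (1 - R₀) = 0 → 0 < I := by
  set c1 : ℝ := b * (δ + 1) + δ * d / β - A with hc1def
  set c0 : ℝ := (b * d * (δ + 1) / β) * (1 - R₀) with hc0def
  have hδne : (δ : ℝ) ≠ 0 := ne_of_gt hδ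
  have hc0 : c0 = c1 ^ 2 / (4 * δ) := by
    field_simp
    linarith [hdisc]
  have key : ∀ I : ℝ, δ * I ^ 2 + c1 * I + c0 = δ * (I + c1 / (2 * δ)) ^ 2 := by
    intro I
    rw [hc0]
    field_simp
    ring
  have hr : (0 : ℝ) < -c1 / (2 * δ) :=
    div_pos (neg_pos.mpr hc1) (by positivity)
  have root : ∀ I : ℝ, δ * I ^ 2 + c1 * I + c0 = 0 → I = -c1 / (2 * δ) := by
    intro I hI
    rw [key] at hI
    have h2 : (I + c1 / (2 * δ)) ^ 2 = 0 := by
      rcases mul_eq_zero.mp hI with h | h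
      · exact absurd h hδne
      · exact h
    have h3 := pow_eq_zero_iff (n := 2) (by norm_num) |>.mp h2
    linear_combination h3
  constructor
  · refine ⟨-c1 / (2 * δ), ?_, fun y hy => root y hy⟩
    show δ * (-c1 / (2 * δ)) ^ 2 + c1 * (-c1 / (2 * δ)) + c0 = 0
    rw [hc0]
    field_simp
    ring
  · intro I hI
    rw [root I hI]
    exact hr
end
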